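/- arXiv:2108.02024 — 4 statements merged into one kernel-verified Lean document; each statement's English description precedes it below -/
import Mathlib

section
/- Let k, e, u, f, t be positive integers with f ∣ e + u, let w = lcm(e, u), and suppose N := k·w·t − (e + u)/f is a positive integer. Then e and u divide w·t·f·N, and in ℚ: k / N = 1 / (w·t) + 1 / (w·t·f·N / e) + 1 / (w·t·f·N / u). -/
/-!
Since `f ∣ e + u`, the definition of `N` says `f * N + (e + u) = k * w * t * f`. Dividing by
`w * t * f * N` gives `k / N = 1 / (w t) + e / (w t f N) + u / (w t f N)`, and the last two terms are
unit fractions with integral denominators because `e` and `u` divide `w = lcm e u`.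
-/

theorem div_eq_one_div_add_one_div_add_one_div {K : Type*} [Field K] {k e u f w t N : K}
    (hw : w ≠ 0) (ht : t ≠ 0) (hf : f ≠ 0) (hN : N ≠ 0) (h : f * N + (e + u) = k * w * t * f) :
    k / N = 1 / (w * t) + 1 / (w * t * f * N / e) + 1 / (w * t * f * N / u) := by
  rw [one_div_div, one_div_div]
  field_simp
  linear_combination -h

theorem Nat.mul_sub_div_add_of_dvd {a b f : ℕ} (hfb : f ∣ b) (h : b / f ≤ a) :
    f * (a - b / f) + b = a * f := by
  have hle : b ≤ f * a := Nat.mul_div_cancel' hfb ▸ Nat.mul_le_mul_left f h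
  rw [Nat.mul_sub, Nat.mul_div_cancel' hfb, Nat.sub_add_cancel hle, Nat.mul_comm]

theorem stmt_9_general (k e u f t : ℕ) (hfd : f ∣ e + u) (w : ℕ) (hw : w = Nat.lcm e u)
    (N : ℕ) (hN : N = k * w * t - (e + u) / f) (hpos : 0 < N) :
    e ∣ w * t * f * N ∧ u ∣ w * t * f * N ∧
      (k : ℚ) / (N : ℚ) =
        1 / ((w * t : ℕ) : ℚ) + 1 / ((w * t * f * N / e : ℕ) : ℚ)
          + 1 / ((w * t * f * N / u : ℕ) : ℚ) := by
  have hew : e ∣ w := hw ▸ Nat.dvd_lcm_left e u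
  have huw : u ∣ w := hw ▸ Nat.dvd_lcm_right e u
  have hlt : (e + u) / f < k * w * t := Nat.sub_pos_iff_lt.mp (hN ▸ hpos)
  obtain ⟨hkw, ht⟩ := CanonicallyOrderedAdd.mul_pos.mp (Nat.zero_lt_of_lt hlt)
  have hw0 : 0 < w := Nat.pos_of_mul_pos_left hkw
  have hf : 0 < f := Nat.pos_of_dvd_of_pos hfd (Nat.add_pos_left (Nat.pos_of_dvd_of_pos hew hw0) u)
  have hkey : f * N + (e + u) = k * w * t * f :=
    hN ▸ Nat.mul_sub_div_add_of_dvd hfd hlt.le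
  have hdvd (d : ℕ) (hd : d ∣ w) : d ∣ w * t * f * N := ((hd.mul_right t).mul_right f).mul_right N
  refine ⟨hdvd e hew, hdvd u huw, ?_⟩
  rw [Nat.cast_div_charZero (hdvd e hew), Nat.cast_div_charZero (hdvd u huw)]
  push_cast
  exact div_eq_one_div_add_one_div_add_one_div (by positivity) (by positivity) (by positivity)
    (by positivity) (by exact_mod_cast hkey)

theorem stmt_9 (k e u f t : ℕ) (hk : 0 < k) (he : 0 < e) (hu : 0 < u)
    (hf : 0 < f) (ht : 0 < t) (hfd : f ∣ e + u) (w : ℕ) (hw : w = Nat.lcm e u)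
    (N : ℕ) (hN : N = k * w * t - (e + u) / f) (hpos : 0 < N) :
    e ∣ w * t * f * N ∧ u ∣ w * t * f * N ∧
      (k : ℚ) / (N : ℚ) =
        1 / ((w * t : ℕ) : ℚ) + 1 / ((w * t * f * N / e : ℕ) : ℚ)
          + 1 / ((w * t * f * N / u : ℕ) : ℚ) :=
  stmt_9_general k e u f t hfd w hw N hN hpos
end

section
/- Let a, ω, t, b, c be positive integers with c > b, set k = c − b and P = (a·ω + b)·t, and suppose P > 1 and N := k·P − (a·ω + c) is a positive integer. Then in ℚ: k / N = 1 / (P − 1) + 1 / (N·t) + 1 / (N·(P − 1)·t). -/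
/-!
Splitting `k / N` into three unit fractions amounts, after clearing denominators, to
`k (P - 1) t = N t + P`, and with `P = (aω + b) t` and `N = kP - (aω + c)` this is the
polynomial identity `k t = (c - b) t`.
-/

theorem div_eq_one_div_add_one_div_add_one_div_s12 {K : Type*} [Field K] {k n q t : K}
    (hn : n ≠ 0) (hq : q ≠ 0) (ht : t ≠ 0) (h : k * q * t = n * t + q + 1) :
    k / n = 1 / q + 1 / (n * t) + 1 / (n * q * t) := by
  field_simp
  linear_combination h

theorem egyptian_split_identity {R : Type*} [CommRing R] (x b c t : R) :
    (c - b) * ((x + b) * t - 1) * t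
      = ((c - b) * ((x + b) * t) - (x + c)) * t + ((x + b) * t - 1) + 1 := by
  ring

theorem stmt_12_general (a ω t b c : ℕ) (ht : 0 < t)
    (hcb : c > b) (k : ℕ) (hkdef : k = c - b)
    (P : ℕ) (hP : P = (a * ω + b) * t) (hP1 : 1 < P)
    (N : ℕ) (hN : N = k * P - (a * ω + c)) (hpos : 0 < N) :
    (k : ℚ) / (N : ℚ) =
      1 / ((P - 1 : ℕ) : ℚ) + 1 / ((N * t : ℕ) : ℚ)
        + 1 / ((N * (P - 1) * t : ℕ) : ℚ) := by
  have hle : a * ω + c ≤ k * P := by omega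
  have hq : ((P - 1 : ℕ) : ℚ) ≠ 0 := by exact_mod_cast (Nat.sub_pos_of_lt hP1).ne'
  push_cast only [Nat.cast_mul]
  refine div_eq_one_div_add_one_div_add_one_div_s12 (by positivity) hq (by positivity) ?_
  subst hkdef hP hN
  push_cast [Nat.cast_sub hcb.le, Nat.cast_sub hle, Nat.cast_sub hP1.le]
  exact egyptian_split_identity _ _ _ _

theorem stmt_12 (a ω t b c : ℕ) (ha : 0 < a) (hω : 0 < ω) (ht : 0 < t)
    (hb : 0 < b) (hc : 0 < c) (hcb : c > b) (k : ℕ) (hkdef : k = c - b)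
    (P : ℕ) (hP : P = (a * ω + b) * t) (hP1 : 1 < P)
    (N : ℕ) (hN : N = k * P - (a * ω + c)) (hpos : 0 < N) :
    (k : ℚ) / (N : ℚ) =
      1 / ((P - 1 : ℕ) : ℚ) + 1 / ((N * t : ℕ) : ℚ)
        + 1 / ((N * (P - 1) * t : ℕ) : ℚ) :=
  stmt_12_general a ω t b c ht hcb k hkdef P hP hP1 N hN hpos
end

section
/- Let a ≥ 2 and b, t, s, v be positive integers, let c₁, …, c_s be positive integers with v > b + cᵢ for every 1 ≤ i ≤ s, and suppose N := a^v·t − (∑_{i=1}^{s} a^{cᵢ} + 1) is a positive integer. Then in ℚ: a^b / N = 1 / (a^{v−b}·t) + ∑_{i=1}^{s} 1 / (a^{v−(b+cᵢ)}·t·N) + 1 / (a^{v−b}·t·N). -/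
open Finset

/- Writing P = a^v t, the hypothesis says P = N + ∑ a^{c_i} + 1, so the identity is
a^b times 1/N = 1/P + (P - N)/(P N); each summand 1/(a^{v-(b+c_i)} t N) is a^b a^{c_i}/(P N). -/

theorem div_eq_div_add_sum_div_add_div {K ι : Type*} [Field K] (s : Finset ι) (w : ι → K)
    {x P N : K} (hP : P ≠ 0) (hN : N ≠ 0) (hPN : P = N + ∑ i ∈ s, w i + 1) :
    x / N = x / P + ∑ i ∈ s, x * w i / (P * N) + x / (P * N) := by
  rw [← sum_div, ← mul_sum]
  field_simp
  rw [hPN]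

theorem one_div_pow_sub_mul {K : Type*} [Field K] {a : K} (ha : a ≠ 0) {k v : ℕ} (hkv : k ≤ v)
    (y : K) : 1 / (a ^ (v - k) * y) = a ^ k / (a ^ v * y) := by
  rw [pow_sub₀ a ha hkv]
  field_simp

theorem stmt_14_general (a b t s v : ℕ)
    (hs : 0 < s) (c : ℕ → ℕ)
    (hc : ∀ i < s, 0 < c i ∧ b + c i < v)
    (N : ℕ) (hN : N = a ^ v * t - (∑ i ∈ Finset.range s, a ^ (c i) + 1))
    (hpos : 0 < N) :
    ((a ^ b : ℕ) : ℚ) / (N : ℚ) =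
      1 / ((a ^ (v - b) * t : ℕ) : ℚ)
        + ∑ i ∈ Finset.range s, 1 / ((a ^ (v - (b + c i)) * t * N : ℕ) : ℚ)
        + 1 / ((a ^ (v - b) * t * N : ℕ) : ℚ) := by
  have hP : a ^ v * t = N + ∑ i ∈ range s, a ^ c i + 1 := by omega
  have hP0 : a ^ v * t ≠ 0 := by omega
  have hbcv := (hc 0 hs).2
  have ha0 : (a : ℚ) ≠ 0 := by exact_mod_cast ne_zero_pow (by omega) (left_ne_zero_of_mul hP0)
  have hbv : b ≤ v := by omega
  push_cast
  rw [one_div_pow_sub_mul ha0 hbv, mul_assoc, one_div_pow_sub_mul ha0 hbv, ← mul_assoc,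
    sum_congr rfl fun i hi => by
      rw [mul_assoc, one_div_pow_sub_mul ha0 (hc i (mem_range.mp hi)).2.le, ← mul_assoc, pow_add]]
  exact div_eq_div_add_sum_div_add_div _ _ (by exact_mod_cast hP0) (by exact_mod_cast hpos.ne')
    (by exact_mod_cast hP)

theorem stmt_14 (a b t s v : ℕ) (ha : 2 ≤ a) (hb : 0 < b) (ht : 0 < t)
    (hs : 0 < s) (hv : 0 < v) (c : ℕ → ℕ)
    (hc : ∀ i < s, 0 < c i ∧ b + c i < v)
    (N : ℕ) (hN : N = a ^ v * t - (∑ i ∈ Finset.range s, a ^ (c i) + 1))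
    (hpos : 0 < N) :
    ((a ^ b : ℕ) : ℚ) / (N : ℚ) =
      1 / ((a ^ (v - b) * t : ℕ) : ℚ)
        + ∑ i ∈ Finset.range s, 1 / ((a ^ (v - (b + c i)) * t * N : ℕ) : ℚ)
        + 1 / ((a ^ (v - b) * t * N : ℕ) : ℚ) :=
  stmt_14_general a b t s v hs c hc N hN hpos
end

section
/- Let ω, t be positive integers and set N = 8·(2ω − 1)·t − (4ω − 1) and M = N·(4ω − 1) + 1. Then N is a positive integer, 8·(2ω − 1) divides M (in particular 4 ∣ M and 4·(4ω − 2) ∣ M), and in ℚ: 4 / N = 1 / (M / 4) + 1 / (M / (4·(4ω − 2))) + 1 / (N·(M / 4)). -/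
/-!
Write `a = 2ω - 1`, so that `4ω - 1 = 2a + 1` and `(4ω - 1)² - 1 = 8aω`. Hence
`M = N(2a + 1) + 1 = 8a·Q` with `Q = t(4ω - 1) - ω`, so `M / 4 = 2aQ` and `M / (8a) = Q`,
and the identity is `M = 8aQ` divided by `2aQN`.
-/

theorem four_div_eq_one_div_add_one_div_add_one_div {K : Type*} [Field K] {A Q N : K}
    (hA : A ≠ 0) (hQ : Q ≠ 0) (hN : N ≠ 0) (h : 4 * A * Q = N * (A + 1) + 1) :
    4 / N = 1 / (A * Q) + 1 / Q + 1 / (N * (A * Q)) := by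
  field_simp
  linear_combination h

theorem sub_mul_add_one_eq_mul (ω t : ℕ) (hω : 0 < ω) (ht : 0 < t) :
    (8 * (2 * ω - 1) * t - (4 * ω - 1)) * (4 * ω - 1) + 1
      = 8 * (2 * ω - 1) * (t * (4 * ω - 1) - ω) := by
  have hN : 4 * ω - 1 ≤ 8 * (2 * ω - 1) * t := by
    calc 4 * ω - 1 ≤ 8 * (2 * ω - 1) := by omega
      _ ≤ 8 * (2 * ω - 1) * t := Nat.le_mul_of_pos_right _ ht
  have hQ : ω ≤ t * (4 * ω - 1) := by
    calc ω ≤ 4 * ω - 1 := by omega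
      _ ≤ t * (4 * ω - 1) := Nat.le_mul_of_pos_left _ ht
  zify [hN, hQ, show 1 ≤ 2 * ω by omega, show 1 ≤ 4 * ω by omega]
  ring

theorem stmt_17 (ω t : ℕ) (hω : 0 < ω) (ht : 0 < t)
    (N : ℕ) (hN : N = 8 * (2 * ω - 1) * t - (4 * ω - 1))
    (M : ℕ) (hM : M = N * (4 * ω - 1) + 1) :
    0 < N ∧ 8 * (2 * ω - 1) ∣ M ∧ 4 ∣ M ∧ 4 * (4 * ω - 2) ∣ M ∧
      (4 : ℚ) / (N : ℚ) =
        1 / ((M / 4 : ℕ) : ℚ) + 1 / ((M / (4 * (4 * ω - 2)) : ℕ) : ℚ)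
          + 1 / ((N * (M / 4) : ℕ) : ℚ) := by
  set a := 2 * ω - 1
  set Q := t * (4 * ω - 1) - ω
  have hMQ : M = 8 * a * Q := by rw [hM, hN]; exact sub_mul_add_one_eq_mul ω t hω ht
  have hNpos : 0 < N := by
    have : 8 * a ≤ 8 * a * t := Nat.le_mul_of_pos_right _ ht
    omega
  have hQpos : 0 < Q := by
    have : 4 * ω - 1 ≤ t * (4 * ω - 1) := Nat.le_mul_of_pos_left _ ht
    omega
  have hM4 : M = 4 * (2 * a * Q) := by rw [hMQ]; ring
  have hM8 : 4 * (4 * ω - 2) = 8 * a := by omega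
  have hkey : 4 * (2 * a) * Q = N * (2 * a + 1) + 1 := by
    rw [mul_assoc, ← hM4, hM, show 4 * ω - 1 = 2 * a + 1 by omega]
  refine ⟨hNpos, ⟨Q, hMQ⟩, ⟨_, hM4⟩, ⟨Q, hM8 ▸ hMQ⟩, ?_⟩
  rw [hM8, hMQ, Nat.mul_div_cancel_left _ (by omega), ← hMQ, hM4,
    Nat.mul_div_cancel_left _ (by norm_num)]
  push_cast
  exact four_div_eq_one_div_add_one_div_add_one_div (by norm_cast; omega) (by norm_cast; omega)
    (by norm_cast; omega) (by exact_mod_cast hkey)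
end
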